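/- arXiv:0906.0762 — 2 statements merged into one kernel-verified Lean document; each statement's English description precedes it below -/
import Mathlib

section
/- Let X ⊆ Y and A ⊆ B be topological spaces, let p : M_Y → Y be a continuous map, let M_X ⊆ p⁻¹(X) be a subspace, and let g : B → Y be a continuous map with g(A) ⊆ X. Define N(p) := {(v, γ) ∈ M_Y × C([0,1], Y) : γ(0) = p(v)} with the product/compact-open topology and projection π(v,γ) := γ(1), and similarly N(p|_{M_X}) := {(v, γ) ∈ M_X × C([0,1], X) : γ(0) = p(v)} (viewed inside N(p) via the inclusions M_X ⊆ M_Y and C([0,1],X) ⊆ C([0,1],Y)). Let g*N(p) := {(b, v, γ) : (v,γ) ∈ N(p), γ(1) = g(b)} with projection to B, and (g|_A)*N(p|_{M_X}) := {(a, v, γ) : a ∈ A, (v,γ) ∈ N(p|_{M_X}), γ(1) = g(a)} ⊆ g*N(p). Then the following are equivalent: (1) there exist a continuous map l : B → M_Y with l(A) ⊆ M_X and a homotopy G : B × [0,1] → Y from p ∘ l to g with G(A × [0,1]) ⊆ X; (2) there exists a continuous section s : B → g*N(p) of the projection g*N(p) → B with s(A) ⊆ (g|_A)*N(p|_{M_X}).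 -/
open unitInterval

/-- Relative lifts up to relative homotopy in the square with `p : M_Y → Y`
(with distinguished subspaces `M_X ⊆ p⁻¹(X)`) on the right and `g : (B,A) → (Y,X)` on the
bottom correspond to relative sections of the pulled-back mapping path fibrations: `(1) ↔ (2)`
below. -/
theorem stmt4 {Y MY B : Type*} [TopologicalSpace Y] [TopologicalSpace MY] [TopologicalSpace B]
    (X : Set Y) (A : Set B) (p : C(MY, Y)) (MX : Set MY) (hMX : ∀ v ∈ MX, p v ∈ X)
    (g : C(B, Y)) (hg : ∀ a ∈ A, g a ∈ X) :
    ((∃ l : C(B, MY),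
        (∀ a ∈ A, l a ∈ MX) ∧
        ∃ G : C(B × unitInterval, Y),
          (∀ b, G (b, 0) = p (l b)) ∧
          (∀ b, G (b, 1) = g b) ∧
          (∀ a ∈ A, ∀ t : unitInterval, G (a, t) ∈ X)) ↔
      (∃ s : C(B, {q : B × MY × C(unitInterval, Y) //
            q.2.2 0 = p q.2.1 ∧ q.2.2 1 = g q.1}),
        (∀ b, (s b : B × MY × C(unitInterval, Y)).1 = b) ∧
        (∀ a ∈ A,
          (s a : B × MY × C(unitInterval, Y)).2.1 ∈ MX ∧
          ∀ t : unitInterval, (s a : B × MY × C(unitInterval, Y)).2.2 t ∈ X))) := by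
  constructor
  · rintro ⟨l, hlA, G, hG0, hG1, hGA⟩
    refine ⟨⟨fun b => ⟨(b, l b, G.curry b), ?_, ?_⟩, ?_⟩, fun b => rfl, fun a ha => ⟨hlA a ha, fun t => hGA a ha t⟩⟩
    · exact hG0 b
    · exact hG1 b
    · refine Continuous.subtype_mk ?_ _
      exact continuous_id.prodMk ((l.continuous).prodMk G.curry.continuous)
  · rintro ⟨s, hs1, hsA⟩
    refine ⟨⟨fun b => (s b : B × MY × C(unitInterval, Y)).2.1, ?_⟩, fun a ha => (hsA a ha).1, ?_⟩
    · exact (continuous_fst.comp continuous_snd).comp (continuous_subtype_val.comp s.continuous)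
    · refine ⟨ContinuousMap.uncurry ⟨fun b => (s b : B × MY × C(unitInterval, Y)).2.2, ?_⟩, ?_, ?_, ?_⟩
      · exact (continuous_snd.comp continuous_snd).comp (continuous_subtype_val.comp s.continuous)
      · exact fun b => (s b).2.1
      · intro b
        show (↑(s b) : B × MY × C(unitInterval, Y)).2.2 1 = g b
        rw [(s b).2.2, hs1 b]
      · exact fun a ha t => (hsA a ha).2 t
end

section
/- Let B be a topological space, A ⊆ B a subspace, p : E_B → B a continuous map, and E_A ⊆ p⁻¹(A) a subspace. If there exists a relative section s of (E_B, E_A) → (B, A) (a continuous s : B → E_B with p ∘ s = id_B and s(A) ⊆ E_A), then the relative homotopy Euler class χ is trivial: there is a homotopy K : B × [0,1] → S_B E_B with q(K(b,t)) = b for all b and t, K(·,0) = σ₂, K(·,1) = σ₁, and K(a,t) ∈ S_{A,B}E_A for all a ∈ A and t ∈ [0,1]. -/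
open unitInterval

/-! Unreduced fiberwise suspension `S_B E_B` of `p : E → B`: the quotient of
`(B × {0}) ⊔ (E × [0,1]) ⊔ (B × {1})` identifying `(e,0) ∼ (p e, 0)` and `(e,1) ∼ (p e, 1)`. -/

/-- The underlying type `B ⊔ (E × I) ⊔ B` before gluing. -/
abbrev SuspPre (B E : Type*) : Type _ := B ⊕ ((E × unitInterval) ⊕ B)

/-- The gluing relation for the unreduced fiberwise suspension. -/
def suspRel {E B : Type*} (p : E → B) : SuspPre B E → SuspPre B E → Prop := fun x y =>
  (∃ e : E, x = Sum.inl (p e) ∧ y = Sum.inr (Sum.inl (e, 0))) ∨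
  (∃ e : E, x = Sum.inr (Sum.inr (p e)) ∧ y = Sum.inr (Sum.inl (e, 1)))

/-- The unreduced fiberwise suspension `S_B E` (a quotient topological space). -/
abbrev FibSusp {E B : Type*} [TopologicalSpace E] [TopologicalSpace B] (p : E → B) : Type _ :=
  Quot (suspRel p)

/-- The projection `q : S_B E → B`. -/
def suspProj {E B : Type*} [TopologicalSpace E] [TopologicalSpace B] (p : E → B) :
    FibSusp p → B :=
  Quot.lift (fun x => match x with
    | Sum.inl b => b
    | Sum.inr (Sum.inl (e, _)) => p e
    | Sum.inr (Sum.inr b) => b)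
  (by rintro x y (⟨e, rfl, rfl⟩ | ⟨e, rfl, rfl⟩) <;> rfl)

/-- The section `σ₁ : B → S_B E`, the inclusion of `B × {0}`. -/
def suspSec₁ {E B : Type*} [TopologicalSpace E] [TopologicalSpace B] (p : E → B) :
    B → FibSusp p := fun b => Quot.mk _ (Sum.inl b)

/-- The section `σ₂ : B → S_B E`, the inclusion of `B × {1}`. -/
def suspSec₂ {E B : Type*} [TopologicalSpace E] [TopologicalSpace B] (p : E → B) :
    B → FibSusp p := fun b => Quot.mk _ (Sum.inr (Sum.inr b))

/-- The subspace `S_{A,B} E_A ⊆ S_B E`: the image of `(B × {0}) ⊔ (E_A × I) ⊔ (A × {1})`. -/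
def suspSubAB {E B : Type*} [TopologicalSpace E] [TopologicalSpace B] (p : E → B)
    (A : Set B) (EA : Set E) : Set (FibSusp p) :=
  Quot.mk (suspRel p) ''
    {x | (∃ b : B, x = Sum.inl b) ∨
         (∃ e ∈ EA, ∃ t : unitInterval, x = Sum.inr (Sum.inl (e, t))) ∨
         (∃ a ∈ A, x = Sum.inr (Sum.inr a))}

/-! The homotopy runs, over each `b`, backwards along the meridian through `s b`, from `σ₂ b`
to `σ₁ b`; for `a ∈ A` this meridian lies in the image of `E_A × I`. -/

section Meridian

variable {E B : Type*} [TopologicalSpace E] [TopologicalSpace B] (p : E → B)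

def suspMeridian (x : E × I) : FibSusp p := Quot.mk _ (Sum.inr (Sum.inl x))

@[fun_prop]
theorem continuous_suspMeridian : Continuous (suspMeridian p) :=
  continuous_quot_mk.comp (continuous_inr.comp continuous_inl)

theorem suspProj_suspMeridian (x : E × I) : suspProj p (suspMeridian p x) = p x.1 := rfl

theorem suspMeridian_zero (e : E) : suspMeridian p (e, 0) = suspSec₁ p (p e) :=
  (Quot.sound (r := suspRel p) (Or.inl ⟨e, rfl, rfl⟩)).symm

theorem suspMeridian_one (e : E) : suspMeridian p (e, 1) = suspSec₂ p (p e) :=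
  (Quot.sound (r := suspRel p) (Or.inr ⟨e, rfl, rfl⟩)).symm

theorem suspMeridian_mem_suspSubAB (A : Set B) {EA : Set E} {e : E} (he : e ∈ EA) (t : I) :
    suspMeridian p (e, t) ∈ suspSubAB p A EA :=
  ⟨_, Or.inr (Or.inl ⟨e, he, t, rfl⟩), rfl⟩

end Meridian

theorem stmt5_general {E B : Type*} [TopologicalSpace E] [TopologicalSpace B]
    (p : E → B) (A : Set B) (EA : Set E)
    (s : C(B, E)) (hsec : ∀ b, p (s b) = b) (hsA : ∀ a ∈ A, s a ∈ EA) :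
    ∃ K : C(B × unitInterval, FibSusp p),
      (∀ b t, suspProj p (K (b, t)) = b) ∧
      (∀ b, K (b, 0) = suspSec₂ p b) ∧
      (∀ b, K (b, 1) = suspSec₁ p b) ∧
      (∀ a ∈ A, ∀ t, K (a, t) ∈ suspSubAB p A EA) := by
  refine ⟨⟨fun x => suspMeridian p (s x.1, σ x.2), by fun_prop⟩, fun b t => (suspProj_suspMeridian p _).trans (hsec b),
    fun b => ?_, fun b => ?_, fun a ha t => suspMeridian_mem_suspSubAB p A (hsA a ha) _⟩
  · simpa only [ContinuousMap.coe_mk, symm_zero, hsec] using suspMeridian_one p (s b)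
  · simpa only [ContinuousMap.coe_mk, symm_one, hsec] using suspMeridian_zero p (s b)

/-- If the pair `(E_B, E_A) → (B, A)` admits a relative section, then the
relative homotopy Euler class is trivial: the two canonical sections `σ₂` and `σ₁` of the
unreduced fiberwise suspension are homotopic over `B` through a homotopy carrying `A` into
`S_{A,B} E_A`. -/
theorem stmt5 {E B : Type*} [TopologicalSpace E] [TopologicalSpace B]
    (p : E → B) (hp : Continuous p) (A : Set B) (EA : Set E) (hEA : ∀ e ∈ EA, p e ∈ A)
    (s : C(B, E)) (hsec : ∀ b, p (s b) = b) (hsA : ∀ a ∈ A, s a ∈ EA) :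
    ∃ K : C(B × unitInterval, FibSusp p),
      (∀ b t, suspProj p (K (b, t)) = b) ∧
      (∀ b, K (b, 0) = suspSec₂ p b) ∧
      (∀ b, K (b, 1) = suspSec₁ p b) ∧
      (∀ a ∈ A, ∀ t, K (a, t) ∈ suspSubAB p A EA) :=
  stmt5_general p A EA s hsec hsA
end
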